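/- Let 𝒞 and 𝒞' be two covers that agree at every vertex except possibly at a single vertex k. Then Φ₂(𝒞') − Φ₂(𝒞) = u_k(𝒞') − u_k(𝒞). In other words, Φ₂ is a weighted potential function for the second-phase community game, so this game converges to a pure Nash equilibrium. -/

import Mathlib

/-!
Regrouping `Φ₂` by pairs of vertices, the pair `(i, j)` contributes `|𝒞(i) ∩ 𝒞(j)| p(i,j)`,
symmetric in `i, j`. A change of `𝒞(k)` alone only changes pairs through `k`, and each such
pair `(k, j)`, `j ≠ k`, is met twice in `Σᵢ u_i`, once from each end: this cancels the
factor `1/2`. The pair `(k, k)` contributes nothing because `p(k,k) = 0`.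
-/

open Finset

/-- Community-closeness `p(i, C)` of vertex `i` to community `C` under the cover `cov`:
the sum of edge-closeness values `p i j` over the vertices `j` whose set of communities
contains `C`. -/
noncomputable def commCloseness {V K : Type*} [Fintype V] [DecidableEq K]
    (p : V → V → ℝ) (cov : V → Finset K) (i : V) (C : K) : ℝ :=
  ∑ j : V, if C ∈ cov j then p i j else 0

/-- Utility `u_i(cov)` of player `i`: the sum of its community-closeness values to all of
its own communities. -/
noncomputable def utility2 {V K : Type*} [Fintype V] [DecidableEq K]
    (p : V → V → ℝ) (cov : V → Finset K) (i : V) : ℝ :=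
  ∑ C ∈ cov i, commCloseness p cov i C

/-- The potential `Φ₂(cov) = (1/2) Σ_i Σ_{C ∈ cov i} p(i, C)`. -/
noncomputable def phi2 {V K : Type*} [Fintype V] [DecidableEq K]
    (p : V → V → ℝ) (cov : V → Finset K) : ℝ :=
  (1 / 2) * ∑ i : V, ∑ C ∈ cov i, commCloseness p cov i C

section CrossSupport

variable {V R : Type*} [Fintype V] [DecidableEq V] [AddCommGroup R]

theorem sum_sum_eq_of_eq_zero_of_ne (d : V → V → R) (k : V)
    (hd : ∀ i j, i ≠ k → j ≠ k → d i j = 0) :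
    ∑ i, ∑ j, d i j = ∑ j, d k j + ∑ i, d i k - d k k := by
  calc ∑ i, ∑ j, d i j = ∑ j, d k j + ∑ i ∈ {k}ᶜ, ∑ j, d i j :=
        Fintype.sum_eq_add_sum_compl k _
    _ = ∑ j, d k j + ∑ i ∈ {k}ᶜ, d i k := by
        congr 1
        refine sum_congr rfl fun i hi => Fintype.sum_eq_single k fun j hj => ?_
        exact hd i j (by simpa using hi) hj
    _ = ∑ j, d k j + ∑ i, d i k - d k k := by
        rw [Fintype.sum_eq_add_sum_compl k (fun i => d i k)]
        abel

end CrossSupport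

section SharedCloseness

variable {V K : Type*} [DecidableEq K]

noncomputable def sharedCloseness (p : V → V → ℝ) (cov : V → Finset K) (i j : V) : ℝ :=
  #(cov i ∩ cov j) * p i j

theorem sharedCloseness_comm {p : V → V → ℝ} (hp_symm : ∀ i j, p i j = p j i)
    (cov : V → Finset K) (i j : V) : sharedCloseness p cov i j = sharedCloseness p cov j i := by
  rw [sharedCloseness, sharedCloseness, inter_comm, hp_symm]

theorem sharedCloseness_self {p : V → V → ℝ} (hp_diag : ∀ i, p i i = 0)
    (cov : V → Finset K) (i : V) : sharedCloseness p cov i i = 0 := by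
  rw [sharedCloseness, hp_diag, mul_zero]

theorem utility2_eq_sum_sharedCloseness [Fintype V] (p : V → V → ℝ) (cov : V → Finset K)
    (i : V) :
    utility2 p cov i = ∑ j, sharedCloseness p cov i j := by
  unfold utility2 commCloseness
  rw [sum_comm]
  refine sum_congr rfl fun j _ => ?_
  rw [sum_ite_mem, sum_const, nsmul_eq_mul, sharedCloseness]

theorem phi2_eq_half_sum_utility2 [Fintype V] (p : V → V → ℝ) (cov : V → Finset K) :
    phi2 p cov = 1 / 2 * ∑ i, utility2 p cov i :=
  rfl

end SharedCloseness

theorem phi2_is_weighted_potential_general {V K : Type*} [Fintype V] [DecidableEq K]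
    (p : V → V → ℝ)
    (hp_symm : ∀ i j, p i j = p j i)
    (hp_diag : ∀ i, p i i = 0)
    (cov cov' : V → Finset K) (k : V)
    (hagree : ∀ j, j ≠ k → cov' j = cov j) :
    phi2 p cov' - phi2 p cov = utility2 p cov' k - utility2 p cov k := by
  classical
  set d : V → V → ℝ := fun i j => sharedCloseness p cov' i j - sharedCloseness p cov i j
  have hd_off : ∀ i j, i ≠ k → j ≠ k → d i j = 0 := fun i j hi hj => by
    simp only [d, sharedCloseness, hagree i hi, hagree j hj, sub_self]
  have hd_kk : d k k = 0 := by
    simp only [d, sharedCloseness_self hp_diag, sub_self]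
  have hd_col : ∑ i, d i k = ∑ j, d k j := sum_congr rfl fun i _ => by
    simp only [d, sharedCloseness_comm hp_symm _ i k]
  have hu : utility2 p cov' k - utility2 p cov k = ∑ j, d k j := by
    simp only [d, utility2_eq_sum_sharedCloseness, sum_sub_distrib]
  calc phi2 p cov' - phi2 p cov = 1 / 2 * ∑ i, ∑ j, d i j := by
        simp only [d, phi2_eq_half_sum_utility2, utility2_eq_sum_sharedCloseness,
          sum_sub_distrib]
        ring
    _ = utility2 p cov' k - utility2 p cov k := by
        rw [sum_sum_eq_of_eq_zero_of_ne d k hd_off, hd_kk, hd_col, hu]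
        ring

/-- If two covers agree at every vertex except possibly at a single
vertex `k`, then `Φ₂(𝒞') − Φ₂(𝒞) = u_k(𝒞') − u_k(𝒞)`: `Φ₂` is a (weighted) potential
function for the second-phase community game, so the game converges to a pure Nash
equilibrium. -/
theorem phi2_is_weighted_potential {V K : Type*} [Fintype V] [Fintype K] [DecidableEq K]
    (p : V → V → ℝ)
    (hp_nonneg : ∀ i j, 0 ≤ p i j)
    (hp_symm : ∀ i j, p i j = p j i)
    (hp_diag : ∀ i, p i i = 0)
    (cov cov' : V → Finset K) (k : V)
    (hagree : ∀ j, j ≠ k → cov' j = cov j) :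
    phi2 p cov' - phi2 p cov = utility2 p cov' k - utility2 p cov k :=
  phi2_is_weighted_potential_general p hp_symm hp_diag cov cov' k hagree
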